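/- arXiv:1301.0810 — 2 statements merged into one kernel-verified Lean document; each statement's English description precedes it below -/
import Mathlib

section
/- Let X be a finite-dimensional real normed space and let A ⊂ X be a nonempty closed set. If the recession cone A_∞ is a pointed convex cone and A = A + A_∞, then the convex hull conv A is closed. -/
open Set Filter Topology Pointwise

/-!
By Carathéodory, every point of `conv A` is a convex combination `∑ wᵢ zᵢ` of `dim X + 1` points
of `A`. Along such combinations converging to `x`, the summands `wᵢ zᵢ` stay bounded: otherwise,
divided by their size, they converge to directions `Wᵢ ∈ A_∞`, not all zero, with `∑ Wᵢ = 0`,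
which pointedness forbids. On a convergent subsequence `wᵢ → λᵢ` and `wᵢ zᵢ → vᵢ`; then
`vᵢ / λᵢ ∈ A` when `λᵢ > 0` since `A` is closed, and `vᵢ ∈ A_∞` when `λᵢ = 0`. With `u` the sum
of the latter, `x = ∑_{λᵢ > 0} λᵢ (vᵢ / λᵢ + u)`, and `vᵢ / λᵢ + u ∈ A + A_∞ = A`.
-/

/-- The recession cone `S_∞` of a set `S`. -/
def recessionCone {X : Type*} [NormedAddCommGroup X] [NormedSpace ℝ X] (S : Set X) : Set X :=
  {u | ∃ t : ℕ → ℝ, (∀ n, 0 < t n) ∧ Filter.Tendsto t Filter.atTop (𝓝 0) ∧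
       ∃ a : ℕ → X, (∀ n, a n ∈ S) ∧ Filter.Tendsto (fun n => t n • a n) Filter.atTop (𝓝 u)}

theorem Function.Injective.sum_extend_zero {ι κ M : Type*} [Fintype ι] [Fintype κ]
    [AddCommMonoid M] {e : ι → κ} (he : e.Injective) (g : ι → M) :
    ∑ j, Function.extend e g 0 j = ∑ i, g i := by
  classical
  rw [← Finset.sum_subset (Finset.subset_univ (Finset.univ.map ⟨e, he⟩)), Finset.sum_map]
  · simp [he.extend_apply]
  · intro j _ hj
    refine Function.extend_apply' _ _ _ ?_
    rintro ⟨i, rfl⟩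
    simp at hj

theorem exists_fin_convexCombination_of_mem_convexHull {𝕜 E : Type*} [Field 𝕜] [LinearOrder 𝕜]
    [IsStrictOrderedRing 𝕜] [AddCommGroup E] [Module 𝕜 E] [FiniteDimensional 𝕜 E]
    {s : Set E} {x : E} (hx : x ∈ convexHull 𝕜 s) :
    ∃ (w : Fin (Module.finrank 𝕜 E + 1) → 𝕜) (z : Fin (Module.finrank 𝕜 E + 1) → E),
      (∀ i, 0 ≤ w i) ∧ ∑ i, w i = 1 ∧ (∀ i, z i ∈ s) ∧ ∑ i, w i • z i = x := by
  obtain ⟨a, ha⟩ := convexHull_nonempty_iff.mp ⟨x, hx⟩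
  obtain ⟨ι, _, z, w, hzs, hind, hw, hw1, hwz⟩ := eq_pos_convex_span_of_mem_convexHull hx
  obtain ⟨e⟩ : Nonempty (ι ↪ Fin (Module.finrank 𝕜 E + 1)) :=
    Function.Embedding.nonempty_of_card_le <| by
      simpa using hind.card_le_finrank_succ.trans (Nat.add_le_add_right (Submodule.finrank_le _) 1)
  -- pad Carathéodory's representation with zero weights at an arbitrary point of `s`
  refine ⟨Function.extend e w 0, Function.extend e z fun _ => a, fun j => ?_, ?_, fun j => ?_, ?_⟩
  · rcases em (∃ i, e i = j) with ⟨i, rfl⟩ | h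
    · simpa [e.injective.extend_apply] using (hw i).le
    · simp [Function.extend_apply' _ _ _ h]
  · rwa [e.injective.sum_extend_zero]
  · rcases em (∃ i, e i = j) with ⟨i, rfl⟩ | h
    · simpa [e.injective.extend_apply] using hzs (mem_range_self i)
    · simpa [Function.extend_apply' _ _ _ h] using ha
  · rw [← hwz, ← e.injective.sum_extend_zero]
    congr! 1 with j
    rcases em (∃ i, e i = j) with ⟨i, rfl⟩ | h
    · simp [e.injective.extend_apply]
    · simp [Function.extend_apply' _ _ _ h]

theorem exists_strictMono_tendsto_atTop_of_not_bddAbove {s : ℕ → ℝ} (h : ¬BddAbove (range s)) :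
    ∃ φ : ℕ → ℕ, StrictMono φ ∧ Tendsto (s ∘ φ) atTop atTop := by
  have hfreq : ∀ k : ℕ, ∃ᶠ n in atTop, (k : ℝ) ≤ s n := fun k hk =>
    h (isBoundedUnder_of_eventually_le (hk.mono fun _ => le_of_not_ge)).bddAbove_range
  obtain ⟨φ, hφ, hk⟩ := extraction_forall_of_frequently hfreq
  exact ⟨φ, hφ, tendsto_atTop_mono hk tendsto_natCast_atTop_atTop⟩

theorem AddSubmonoid.eq_zero_of_sum_eq_zero {E : Type*} [AddCommGroup E] (K : AddSubmonoid E)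
    (hK : (K : Set E) ∩ -K = {0}) {ι : Type*} [Fintype ι] {W : ι → E} (hW : ∀ i, W i ∈ K)
    (hsum : ∑ i, W i = 0) : W = 0 := by
  classical
  funext i
  have hneg : -W i ∈ K := by
    rw [neg_eq_of_add_eq_zero_right ((Finset.add_sum_erase _ W (Finset.mem_univ i)).trans hsum)]
    exact K.sum_mem fun j _ => hW j
  have : W i ∈ (K : Set E) ∩ -K := ⟨hW i, hneg⟩
  rwa [hK] at this

theorem sum_mem_convexHull_of_add_subset {𝕜 E : Type*} [Field 𝕜] [LinearOrder 𝕜]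
    [IsStrictOrderedRing 𝕜] [AddCommGroup E] [Module 𝕜 E] {A : Set E} (K : AddSubmonoid E)
    (hAK : A + K ⊆ A) {ι : Type*} [Fintype ι] {Λ : ι → 𝕜} {V : ι → E} (hΛ0 : ∀ i, 0 ≤ Λ i)
    (hΛ1 : ∑ i, Λ i = 1) (hpos : ∀ i, Λ i ≠ 0 → (Λ i)⁻¹ • V i ∈ A)
    (hzero : ∀ i, Λ i = 0 → V i ∈ K) :
    ∑ i, V i ∈ convexHull 𝕜 A := by
  classical
  set P := Finset.univ.filter fun i => Λ i ≠ 0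
  set u := ∑ i ∈ Finset.univ.filter (fun i => ¬Λ i ≠ 0), V i
  have hu : u ∈ K := K.sum_mem fun i hi => hzero i (not_not.mp (Finset.mem_filter.mp hi).2)
  have hPΛ : ∑ i ∈ P, Λ i = 1 := by rw [Finset.sum_filter_ne_zero, hΛ1]
  have hsplit : ∑ i, V i = ∑ i ∈ P, Λ i • ((Λ i)⁻¹ • V i + u) := calc
    ∑ i, V i = ∑ i ∈ P, V i + u := (Finset.sum_filter_add_sum_filter_not _ _ _).symm
    _ = ∑ i ∈ P, (V i + Λ i • u) := by
      rw [Finset.sum_add_distrib, ← Finset.sum_smul, hPΛ, one_smul]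
    _ = _ := Finset.sum_congr rfl fun i hi => by
      rw [smul_add, smul_inv_smul₀ (Finset.mem_filter.mp hi).2]
  rw [hsplit]
  exact (convex_convexHull 𝕜 A).sum_mem (fun i _ => hΛ0 i) hPΛ fun i hi =>
    subset_convexHull 𝕜 A (hAK (add_mem_add (hpos i (Finset.mem_filter.mp hi).2) hu))

section RecessionCone

variable {X : Type*} [NormedAddCommGroup X] [NormedSpace ℝ X] {A : Set X}

theorem zero_mem_recessionCone (hA : A.Nonempty) : (0 : X) ∈ recessionCone A := by
  obtain ⟨a, ha⟩ := hA
  refine ⟨fun n => 1 / (n + 1), fun n => by positivity, tendsto_one_div_add_atTop_nhds_zero_nat,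
    fun _ => a, fun _ => ha, ?_⟩
  simpa using (tendsto_one_div_add_atTop_nhds_zero_nat (𝕜 := ℝ)).smul_const a

theorem mem_recessionCone_of_tendsto {t : ℕ → ℝ} {a : ℕ → X} {u : X} (ht0 : ∀ n, 0 ≤ t n)
    (ht : Tendsto t atTop (𝓝 0)) (ha : ∀ n, a n ∈ A)
    (hu : Tendsto (fun n => t n • a n) atTop (𝓝 u)) :
    u ∈ recessionCone A := by
  by_cases hzero : ∃ᶠ n in atTop, t n = 0
  · obtain ⟨φ, hφ, htφ⟩ := extraction_of_frequently_atTop hzero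
    have : u = 0 := tendsto_nhds_unique (hu.comp hφ.tendsto_atTop)
      (by simp [Function.comp_def, htφ])
    exact this ▸ zero_mem_recessionCone ⟨a 0, ha 0⟩
  · obtain ⟨N, hN⟩ := eventually_atTop.mp (not_frequently.mp hzero)
    have hshift : Tendsto (· + N) atTop atTop := tendsto_add_atTop_nat N
    exact ⟨fun n => t (n + N), fun n => (ht0 _).lt_of_ne' (hN _ (Nat.le_add_left _ _)),
      ht.comp hshift, fun n => a (n + N), fun n => ha _, hu.comp hshift⟩

theorem add_mem_recessionCone (hconv : Convex ℝ (recessionCone A))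
    (hcone : ∀ t : ℝ, 0 < t → ∀ u ∈ recessionCone A, t • u ∈ recessionCone A)
    {u v : X} (hu : u ∈ recessionCone A) (hv : v ∈ recessionCone A) :
    u + v ∈ recessionCone A := by
  have := hcone 2 two_pos _ <| hconv hu hv (by norm_num : (0 : ℝ) ≤ 1 / 2)
    (by norm_num : (0 : ℝ) ≤ 1 / 2) (by norm_num)
  rwa [smul_add, smul_smul, smul_smul, mul_one_div_cancel two_ne_zero, one_smul, one_smul] at this

theorem IsClosed.inv_smul_mem_of_tendsto (hA : IsClosed A) {w : ℕ → ℝ} {z : ℕ → X} {c : ℝ}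
    {v : X} (hw : Tendsto w atTop (𝓝 c)) (hc : c ≠ 0) (hz : ∀ n, z n ∈ A)
    (hv : Tendsto (fun n => w n • z n) atTop (𝓝 v)) : c⁻¹ • v ∈ A :=
  hA.mem_of_tendsto (((hw.inv₀ hc).smul hv).congr'
    ((hw.eventually_ne hc).mono fun _ hn => inv_smul_smul₀ hn _)) (.of_forall hz)

variable [FiniteDimensional ℝ X] {ι : Type*} [Fintype ι] {w : ℕ → ι → ℝ} {z : ℕ → ι → X} {x : X}

theorem bddAbove_norm_summands_of_tendsto (K : AddSubmonoid X) (hKA : recessionCone A ⊆ K)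
    (hK : (K : Set X) ∩ -K = {0}) (hw0 : ∀ n i, 0 ≤ w n i) (hw1 : ∀ n i, w n i ≤ 1)
    (hz : ∀ n i, z n i ∈ A) (hx : Tendsto (fun n => ∑ i, w n i • z n i) atTop (𝓝 x)) :
    BddAbove (range fun n => ‖fun i => w n i • z n i‖) := by
  set v : ℕ → ι → X := fun n i => w n i • z n i
  by_contra hunb
  obtain ⟨φ, hφ, hvφ⟩ := exists_strictMono_tendsto_atTop_of_not_bddAbove hunb
  set u : ℕ → ι → X := fun n => ‖v (φ n)‖⁻¹ • v (φ n)
  have hu : ∀ n, u n ∈ Metric.closedBall 0 1 := fun n => by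
    rw [mem_closedBall_zero_iff, norm_smul, norm_inv, norm_norm]
    exact inv_mul_le_one_of_le₀ le_rfl (norm_nonneg _)
  obtain ⟨W, -, ψ, hψ, hW⟩ := tendsto_subseq_of_bounded Metric.isBounded_closedBall hu
  have hvψ := hvφ.comp hψ.tendsto_atTop
  have hinv : Tendsto (fun n => ‖v (φ (ψ n))‖⁻¹) atTop (𝓝 0) := hvψ.inv_tendsto_atTop
  have hWK : ∀ i, W i ∈ K := fun i => hKA <|
    mem_recessionCone_of_tendsto (t := fun n => ‖v (φ (ψ n))‖⁻¹ * w (φ (ψ n)) i)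
      (fun n => mul_nonneg (inv_nonneg.mpr (norm_nonneg _)) (hw0 _ i))
      (squeeze_zero (fun n => mul_nonneg (inv_nonneg.mpr (norm_nonneg _)) (hw0 _ i))
        (fun n => mul_le_of_le_one_right (inv_nonneg.mpr (norm_nonneg _)) (hw1 _ i)) hinv)
      (fun n => hz _ i) (by simpa [u, v, mul_smul] using tendsto_pi_nhds.mp hW i)
  have hWsum : ∑ i, W i = 0 := tendsto_nhds_unique
    (tendsto_finsetSum _ fun i _ => tendsto_pi_nhds.mp hW i)
    (by simpa [u, v, ← Finset.smul_sum] using hinv.smul (hx.comp (hφ.comp hψ).tendsto_atTop))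
  have hWnorm : ‖W‖ = 1 := tendsto_nhds_unique hW.norm <| tendsto_const_nhds.congr' <|
    (hvψ.eventually_ge_atTop 1).mono fun n hn => by
      simp only [Function.comp_apply, u] at hn ⊢
      rw [norm_smul, norm_inv, norm_norm, inv_mul_cancel₀ (one_pos.trans_le hn).ne']
  exact one_ne_zero (hWnorm ▸ norm_eq_zero.mpr (K.eq_zero_of_sum_eq_zero hK hWK hWsum))

theorem mem_convexHull_of_tendsto_of_bddAbove (hA : IsClosed A) (K : AddSubmonoid X)
    (hKA : recessionCone A ⊆ K) (hAK : A + K ⊆ A) (hw0 : ∀ n i, 0 ≤ w n i)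
    (hw1 : ∀ n, ∑ i, w n i = 1) (hz : ∀ n i, z n i ∈ A)
    (hbdd : BddAbove (range fun n => ‖fun i => w n i • z n i‖))
    (hx : Tendsto (fun n => ∑ i, w n i • z n i) atTop (𝓝 x)) :
    x ∈ convexHull ℝ A := by
  obtain ⟨C, hC⟩ := hbdd
  have hmem : ∀ n, (w n, fun i => w n i • z n i) ∈
      Metric.closedBall (0 : ι → ℝ) 1 ×ˢ Metric.closedBall 0 C := fun n => by
    refine ⟨?_, mem_closedBall_zero_iff.mpr (hC (mem_range_self n))⟩
    rw [mem_closedBall_zero_iff, pi_norm_le_iff_of_nonneg zero_le_one]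
    intro i
    rw [Real.norm_of_nonneg (hw0 n i), ← hw1 n]
    exact Finset.single_le_sum (fun j _ => hw0 n j) (Finset.mem_univ i)
  obtain ⟨⟨Λ, V⟩, -, φ, hφ, hlim⟩ := tendsto_subseq_of_bounded
    (Metric.isBounded_closedBall.prod Metric.isBounded_closedBall) hmem
  have hΛ : ∀ i, Tendsto (fun n => w (φ n) i) atTop (𝓝 (Λ i)) := tendsto_pi_nhds.mp hlim.fst_nhds
  have hV : ∀ i, Tendsto (fun n => w (φ n) i • z (φ n) i) atTop (𝓝 (V i)) :=
    tendsto_pi_nhds.mp hlim.snd_nhds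
  have hΛ1 : ∑ i, Λ i = 1 := tendsto_nhds_unique (tendsto_finsetSum _ fun i _ => hΛ i)
    (by simp [hw1])
  rw [← tendsto_nhds_unique (tendsto_finsetSum _ fun i _ => hV i) (hx.comp hφ.tendsto_atTop)]
  exact sum_mem_convexHull_of_add_subset K hAK (fun i => ge_of_tendsto' (hΛ i) fun n => hw0 _ i)
    hΛ1 (fun i hi => hA.inv_smul_mem_of_tendsto (hΛ i) hi (fun n => hz _ i) (hV i))
    fun i hi => hKA (mem_recessionCone_of_tendsto (fun n => hw0 _ i) (hi ▸ hΛ i) (fun n => hz _ i)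
      (hV i))

end RecessionCone

theorem stmt6_general {X : Type*} [NormedAddCommGroup X] [NormedSpace ℝ X]
    [FiniteDimensional ℝ X]
    (A : Set X) (hA : A.Nonempty) (hAclosed : IsClosed A)
    (hconv : Convex ℝ (recessionCone A))
    (hcone : ∀ t : ℝ, 0 < t → ∀ u ∈ recessionCone A, t • u ∈ recessionCone A)
    (hpointed : recessionCone A ∩ (-(recessionCone A)) = {0})
    (hsum : A + recessionCone A = A) :
    IsClosed (convexHull ℝ A) := by
  let K : AddSubmonoid X :=
    ⟨⟨recessionCone A, add_mem_recessionCone hconv hcone⟩, zero_mem_recessionCone hA⟩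
  refine isSeqClosed_iff_isClosed.mp fun y x hy hyx => ?_
  choose w z hw0 hw1 hz hwz using fun n => exists_fin_convexCombination_of_mem_convexHull (hy n)
  have hx : Tendsto (fun n => ∑ i, w n i • z n i) atTop (𝓝 x) := by simpa only [hwz] using hyx
  have hw1' : ∀ n i, w n i ≤ 1 := fun n i =>
    hw1 n ▸ Finset.single_le_sum (fun j _ => hw0 n j) (Finset.mem_univ i)
  exact mem_convexHull_of_tendsto_of_bddAbove hAclosed K subset_rfl hsum.subset hw0 hw1 hz
    (bddAbove_norm_summands_of_tendsto K subset_rfl hpointed hw0 hw1' hz hx) hx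

/-- Let `A` be a nonempty closed set in a nontrivial finite-dimensional
real normed space. If the recession cone `A_∞` is a pointed convex cone and
`A = A + A_∞`, then `conv A` is closed. -/
theorem stmt6 {X : Type*} [NormedAddCommGroup X] [NormedSpace ℝ X]
    [FiniteDimensional ℝ X] [Nontrivial X]
    (A : Set X) (hA : A.Nonempty) (hAclosed : IsClosed A)
    (hconv : Convex ℝ (recessionCone A))
    (hcone : ∀ t : ℝ, 0 < t → ∀ u ∈ recessionCone A, t • u ∈ recessionCone A)
    (hpointed : recessionCone A ∩ (-(recessionCone A)) = {0})
    (hsum : A + recessionCone A = A) :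
    IsClosed (convexHull ℝ A) :=
  stmt6_general A hA hAclosed hconv hcone hpointed hsum
end

section
/- Let X be a finite-dimensional real normed space and let K, A ⊂ X satisfy condition (H). Assume that for all a, a' ∈ A with a ≠ a' and all λ ∈ (0,1) one has λa + (1−λ)a' ∈ int_K A. Then A is convex, σ_A is (Fréchet) differentiable at every point of int K⁻, and A + (K \ {0}) ⊂ int_K A. -/
open Set Filter Topology Pointwise

variable {X : Type*} [NormedAddCommGroup X] [NormedSpace ℝ X]

/-- The support function `σ_A : X* → ℝ ∪ {+∞}`. -/
noncomputable def supportFn (A : Set X) (f : X →L[ℝ] ℝ) : EReal :=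
  ⨆ a ∈ A, (f a : EReal)

/-- The negative dual cone `K⁻ = {x* : ⟨k, x*⟩ ≤ 0 for all k ∈ K}`. -/
def negDual (K : Set X) : Set (X →L[ℝ] ℝ) := {f | ∀ x ∈ K, f x ≤ 0}

/-- `σ_A` is (Fréchet) differentiable at `f`: there is a real-valued function agreeing
with `σ_A` on a neighbourhood of `f` which is differentiable at `f`. -/
def SigmaDiffAt (A : Set X) (f : X →L[ℝ] ℝ) : Prop :=
  ∃ g : (X →L[ℝ] ℝ) → ℝ, (∀ᶠ y in 𝓝 f, ((g y : ℝ) : EReal) = supportFn A y) ∧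
    DifferentiableAt ℝ g f

/-- `int_K A`: the interior of `A` in the subspace topology of `K`. -/
def intWithin (K A : Set X) : Set X :=
  {x ∈ K | ∃ U : Set X, IsOpen U ∧ x ∈ U ∧ K ∩ U ⊆ A}

/-!
At a functional `f` in the interior of `K⁻`, `f` and every nearby `y` satisfy `y x ≤ -c ‖x‖`
on `K`, so `y` attains its supremum over the closed set `A` and all maximizers stay bounded.
The maximizer `a₀` of `f` is unique: for two maximizers their midpoint lies in `int_K A`, so
slightly shrinking it towards the origin stays in `A` and strictly increases `f`, because
`f < 0` on `A`. By compactness, maximizers of `y` then converge to `a₀` as `y → f`, which is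
exactly what makes `σ_A` differentiable at `f` with derivative `y ↦ y a₀` (Danskin).
Convexity and `A + (K \ {0}) ⊆ int_K A` come from the segment hypothesis directly, the
latter since `a + k` is the midpoint of `a` and `a + 2 k`.
-/

theorem eventually_smul_mem_of_mem_intWithin {K A : Set X}
    (hKcone : ∀ t : ℝ, 0 ≤ t → ∀ x ∈ K, t • x ∈ K) {m : X} (hm : m ∈ intWithin K A) :
    ∀ᶠ t in 𝓝 (1 : ℝ), t • m ∈ A := by
  obtain ⟨hmK, U, hU, hmU, hUA⟩ := hm
  have hU' : ∀ᶠ t in 𝓝 (1 : ℝ), t • m ∈ U :=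
    (continuous_id.smul continuous_const).continuousAt.eventually_mem
      (by simpa using hU.mem_nhds hmU)
  filter_upwards [hU', Ioi_mem_nhds one_pos] with t htU ht
  exact hUA ⟨hKcone t ht.le m hmK, htU⟩

theorem abs_sub_apply_le (y f : X →L[ℝ] ℝ) (x : X) : |y x - f x| ≤ ‖y - f‖ * ‖x‖ := by
  simpa using (y - f).le_opNorm x

theorem supportFn_eq_of_isMaxOn {A : Set X} {y : X →L[ℝ] ℝ} {b : X} (hb : b ∈ A)
    (hmax : IsMaxOn y A b) : supportFn A y = y b :=
  le_antisymm (iSup₂_le fun _ ha => EReal.coe_le_coe_iff.2 (hmax ha))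
    (le_iSup₂ (f := fun a (_ : a ∈ A) => (y a : EReal)) b hb)

theorem le_neg_mul_norm_of_ball_subset_negDual {K : Set X} {y : X →L[ℝ] ℝ} {r : ℝ}
    (hr : 0 < r) (hball : Metric.ball y r ⊆ negDual K) {x : X} (hx : x ∈ K) :
    y x ≤ -(r / 2 * ‖x‖) := by
  obtain ⟨h, hh, hhx⟩ := exists_dual_vector'' ℝ x
  have hmem : y + (r / 2) • h ∈ Metric.ball y r := by
    rw [Metric.mem_ball, dist_eq_norm, add_sub_cancel_left, norm_smul,
      Real.norm_of_nonneg (half_pos hr).le]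
    nlinarith
  have := hball hmem x hx
  simp only [add_apply, smul_apply, hhx, smul_eq_mul, RCLike.ofReal_real_eq_id, id_eq] at this
  linarith

theorem exists_pos_eventually_le_neg_mul_norm_of_mem_interior_negDual {K : Set X} {f : X →L[ℝ] ℝ}
    (hf : f ∈ interior (negDual K)) :
    ∃ c > 0, ∀ᶠ y in 𝓝 f, ∀ x ∈ K, y x ≤ -(c * ‖x‖) := by
  obtain ⟨ε, hε, hball⟩ := Metric.mem_nhds_iff.1 (mem_interior_iff_mem_nhds.1 hf)
  refine ⟨ε / 4, by positivity, ?_⟩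
  filter_upwards [Metric.ball_mem_nhds f (half_pos hε)] with y hy x hx
  have hsub : Metric.ball y (ε / 2) ⊆ negDual K :=
    (Metric.ball_subset_ball' (by rw [Metric.mem_ball] at hy; linarith)).trans hball
  have := le_neg_mul_norm_of_ball_subset_negDual (half_pos hε) hsub hx
  linarith

theorem exists_isMaxOn_of_le_neg_mul_norm [ProperSpace X] {A : Set X} (hAne : A.Nonempty)
    (hA : IsClosed A) {y : X →L[ℝ] ℝ} {c : ℝ} (hc : 0 < c) (hy : ∀ a ∈ A, y a ≤ -(c * ‖a‖)) :
    ∃ b ∈ A, IsMaxOn y A b := by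
  obtain ⟨a₁, ha₁⟩ := hAne
  refine y.continuous.continuousOn.exists_isMaxOn' hA ha₁ ?_
  have hfar : ∀ᶠ x : X in cocompact X, |y a₁| / c ≤ ‖x‖ :=
    tendsto_norm_cocompact_atTop.eventually_ge_atTop _
  filter_upwards [hfar.filter_mono inf_le_left, mem_inf_of_right (mem_principal_self A)]
    with x hx hxA
  rw [div_le_iff₀ hc] at hx
  linarith [hy x hxA, neg_abs_le (y a₁)]

theorem eq_of_isMaxOn_of_apply_eq {K A : Set X} (hKcone : ∀ t : ℝ, 0 ≤ t → ∀ x ∈ K, t • x ∈ K)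
    (hmid : ∀ a ∈ A, ∀ a' ∈ A, a ≠ a' → midpoint ℝ a a' ∈ intWithin K A)
    {f : X →L[ℝ] ℝ} (hneg : ∀ a ∈ A, f a < 0) {a a' : X} (ha : a ∈ A) (hmax : IsMaxOn f A a)
    (ha' : a' ∈ A) (heq : f a' = f a) : a' = a := by
  by_contra hne
  set m := midpoint ℝ a' a
  have hfm : f m = f a := by
    simp only [m, midpoint_eq_smul_add, invOf_eq_inv, map_smul, map_add, heq, smul_eq_mul]
    ring
  obtain ⟨t, htm, ht⟩ := ((eventually_smul_mem_of_mem_intWithin hKcone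
    (hmid a' ha' a ha hne)).filter_mono nhdsWithin_le_nhds |>.and
    self_mem_nhdsWithin).exists (f := 𝓝[<] (1 : ℝ))
  have : f (t • m) ≤ f a := hmax htm
  rw [map_smul, smul_eq_mul, hfm] at this
  have hfa := hneg a ha
  nlinarith

theorem norm_le_of_isMaxOn {A : Set X} {f y : X →L[ℝ] ℝ} {a₀ b : X} {c : ℝ} (hc : 0 < c)
    (ha₀ : a₀ ∈ A) (hmax : IsMaxOn y A b) (hy : ‖y - f‖ ≤ 1) (hb : y b ≤ -(c * ‖b‖)) :
    ‖b‖ ≤ (‖a₀‖ - f a₀) / c := by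
  have hya₀ : y a₀ ≤ y b := hmax ha₀
  have hclose : f a₀ - y a₀ ≤ ‖a₀‖ :=
    calc f a₀ - y a₀ ≤ ‖y - f‖ * ‖a₀‖ := by
          linarith [neg_abs_le (y a₀ - f a₀), abs_sub_apply_le y f a₀]
      _ ≤ ‖a₀‖ := mul_le_of_le_one_left (norm_nonneg _) hy
  rw [le_div_iff₀ hc]
  linarith

theorem eventually_forall_isMaxOn_norm_sub_le [ProperSpace X] {A : Set X} (hA : IsClosed A)
    {f : X →L[ℝ] ℝ} {a₀ : X} (ha₀ : a₀ ∈ A) (hmax₀ : IsMaxOn f A a₀)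
    (huniq : ∀ a ∈ A, f a = f a₀ → a = a₀) {c : ℝ} (hc : 0 < c)
    (hcoer : ∀ᶠ y in 𝓝 f, ∀ a ∈ A, y a ≤ -(c * ‖a‖)) {e : ℝ} (he : 0 < e) :
    ∀ᶠ y : X →L[ℝ] ℝ in 𝓝 f, ∀ b ∈ A, IsMaxOn y A b → ‖b - a₀‖ ≤ e := by
  set R := (‖a₀‖ - f a₀) / c
  set C := A ∩ Metric.closedBall 0 R ∩ {a | e ≤ ‖a - a₀‖}
  have hC : IsCompact C :=
    (isCompact_closedBall (0 : X) R).of_isClosed_subset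
      ((hA.inter Metric.isClosed_closedBall).inter
        (isClosed_le continuous_const (continuous_sub_right a₀).norm))
      fun a ha => ha.1.2
  have hlt : ∀ a ∈ C, 0 < f a₀ - f a := fun a ⟨⟨haA, _⟩, hae⟩ => by
    have hne : a ≠ a₀ := by
      rintro rfl
      simp only [mem_ofPred_eq, sub_self, norm_zero] at hae
      linarith
    exact sub_pos.2 ((hmax₀ haA).lt_of_ne fun h => hne (huniq a haA h))
  obtain ⟨δ, hδ, hgap⟩ := hC.exists_forall_le'
    (f := fun a => f a₀ - f a) (continuous_const.sub f.continuous).continuousOn hlt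
  have hsmall : ∀ᶠ y in 𝓝 f, ‖y - f‖ * (R + ‖a₀‖) < δ := by
    refine ((continuous_sub_right f).norm.mul continuous_const).continuousAt.eventually_lt
      continuousAt_const ?_
    simpa using hδ
  filter_upwards [hcoer, hsmall, Metric.closedBall_mem_nhds f one_pos] with y hy hyδ hy1 b hb hmax
  have hbR : ‖b‖ ≤ R :=
    norm_le_of_isMaxOn hc ha₀ hmax (by rwa [← dist_eq_norm]) (hy b hb)
  by_contra! hfar
  have hgapb := hgap b ⟨⟨hb, by rwa [mem_closedBall_zero_iff]⟩, hfar.le⟩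
  -- a maximizer of `y` far from `a₀` loses at least `δ` in `f`, more than `y - f` can make up
  have hdev : y b - f b - (y a₀ - f a₀) ≤ ‖y - f‖ * (R + ‖a₀‖) :=
    calc y b - f b - (y a₀ - f a₀) ≤ ‖y - f‖ * ‖b‖ + ‖y - f‖ * ‖a₀‖ := by
          linarith [abs_le.1 (abs_sub_apply_le y f b), abs_le.1 (abs_sub_apply_le y f a₀)]
      _ ≤ ‖y - f‖ * (R + ‖a₀‖) := by rw [← mul_add]; gcongr
  linarith [isMaxOn_iff.1 hmax a₀ ha₀]

theorem hasFDerivAt_supportFn_toReal {A : Set X} {f : X →L[ℝ] ℝ} {a₀ : X} (ha₀ : a₀ ∈ A)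
    (hmax₀ : IsMaxOn f A a₀) (hex : ∀ᶠ y : X →L[ℝ] ℝ in 𝓝 f, ∃ b ∈ A, IsMaxOn y A b)
    (hconv : ∀ e > 0, ∀ᶠ y : X →L[ℝ] ℝ in 𝓝 f, ∀ b ∈ A, IsMaxOn y A b → ‖b - a₀‖ ≤ e) :
    HasFDerivAt (fun y => (supportFn A y).toReal) (ContinuousLinearMap.apply ℝ ℝ a₀) f := by
  refine hasFDerivAt_iff_isLittleO.2 (Asymptotics.isLittleO_iff.2 fun e he => ?_)
  filter_upwards [hex, hconv e he] with y ⟨b, hb, hmax⟩ hclose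
  rw [supportFn_eq_of_isMaxOn hb hmax, supportFn_eq_of_isMaxOn ha₀ hmax₀]
  simp only [EReal.toReal_coe, ContinuousLinearMap.apply_apply, sub_apply,
    Real.norm_eq_abs]
  have hlow : 0 ≤ y b - f a₀ - (y a₀ - f a₀) := by linarith [isMaxOn_iff.1 hmax a₀ ha₀]
  have hup : y b - f a₀ - (y a₀ - f a₀) ≤ (y - f) (b - a₀) := by
    simp only [sub_apply, map_sub]
    linarith [isMaxOn_iff.1 hmax₀ b hb]
  rw [abs_of_nonneg hlow]
  calc _ ≤ (y - f) (b - a₀) := hup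
    _ ≤ ‖y - f‖ * ‖b - a₀‖ := le_of_abs_le (by simpa using (y - f).le_opNorm (b - a₀))
    _ ≤ e * ‖y - f‖ := by rw [mul_comm]; gcongr; exact hclose b hb hmax

theorem convex_of_forall_openSegment_subset_intWithin {K A : Set X}
    (hsas : ∀ a ∈ A, ∀ a' ∈ A, a ≠ a' →
      ∀ t : ℝ, t ∈ Ioo (0 : ℝ) 1 → t • a + (1 - t) • a' ∈ intWithin K A) :
    Convex ℝ A := by
  refine convex_iff_forall_pos.2 fun x hx y hy s t hs ht hst => ?_
  rcases eq_or_ne x y with rfl | hxy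
  · rwa [← add_smul, hst, one_smul]
  · rw [eq_sub_of_add_eq' hst]
    obtain ⟨hK, _, _, hU, hUA⟩ := hsas x hx y hy hxy s ⟨hs, by linarith⟩
    exact hUA ⟨hK, hU⟩

theorem add_diff_zero_subset_intWithin {K A : Set X}
    (hKcone : ∀ t : ℝ, 0 ≤ t → ∀ x ∈ K, t • x ∈ K) (hAK : A + K = A)
    (hmid : ∀ a ∈ A, ∀ a' ∈ A, a ≠ a' → midpoint ℝ a a' ∈ intWithin K A) :
    A + (K \ {0}) ⊆ intWithin K A := by
  rintro _ ⟨a, ha, k, ⟨hkK, hk0⟩, rfl⟩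
  have ha2k : a + (2 : ℝ) • k ∈ A := hAK ▸ add_mem_add ha (hKcone 2 zero_le_two k hkK)
  have hne : a ≠ a + (2 : ℝ) • k := by simpa using hk0
  convert hmid a ha _ ha2k hne using 1
  rw [midpoint_eq_smul_add, invOf_eq_inv]
  module

theorem sigmaDiffAt_of_mem_interior_negDual [FiniteDimensional ℝ X] {K A : Set X}
    (hKcone : ∀ t : ℝ, 0 ≤ t → ∀ x ∈ K, t • x ∈ K) (hAne : A.Nonempty) (hA : IsClosed A)
    (hAsub : A ⊆ K \ {0})
    (hmid : ∀ a ∈ A, ∀ a' ∈ A, a ≠ a' → midpoint ℝ a a' ∈ intWithin K A)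
    {f : X →L[ℝ] ℝ} (hf : f ∈ interior (negDual K)) : SigmaDiffAt A f := by
  obtain ⟨c, hc, hcoerK⟩ := exists_pos_eventually_le_neg_mul_norm_of_mem_interior_negDual hf
  have hcoer : ∀ᶠ y in 𝓝 f, ∀ a ∈ A, y a ≤ -(c * ‖a‖) :=
    hcoerK.mono fun y hy a ha => hy a (hAsub ha).1
  have hex : ∀ᶠ y : X →L[ℝ] ℝ in 𝓝 f, ∃ b ∈ A, IsMaxOn y A b :=
    hcoer.mono fun y hy => exists_isMaxOn_of_le_neg_mul_norm hAne hA hc hy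
  obtain ⟨a₀, ha₀, hmax₀⟩ := hex.self_of_nhds
  have hneg : ∀ a ∈ A, f a < 0 := fun a ha =>
    (hcoer.self_of_nhds a ha).trans_lt
      (neg_neg_of_pos (mul_pos hc (norm_pos_iff.2 (hAsub ha).2)))
  have huniq : ∀ a ∈ A, f a = f a₀ → a = a₀ := fun a ha =>
    eq_of_isMaxOn_of_apply_eq hKcone hmid hneg ha₀ hmax₀ ha
  refine ⟨_, hex.mono fun y ⟨b, hb, hmax⟩ => ?_,
    (hasFDerivAt_supportFn_toReal ha₀ hmax₀ hex fun e he =>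
      eventually_forall_isMaxOn_norm_sub_le hA ha₀ hmax₀ huniq hc hcoer he).differentiableAt⟩
  rw [supportFn_eq_of_isMaxOn hb hmax, EReal.toReal_coe]

theorem stmt11_general [FiniteDimensional ℝ X]
    (K A : Set X)
    (hKcone : ∀ t : ℝ, 0 ≤ t → ∀ x ∈ K, t • x ∈ K)
    (hAne : A.Nonempty) (hAclosed : IsClosed A)
    (hAK : A + K = A) (hAsub : A ⊆ K \ {0})
    (hsas : ∀ a ∈ A, ∀ a' ∈ A, a ≠ a' →
      ∀ t : ℝ, t ∈ Ioo (0 : ℝ) 1 → t • a + (1 - t) • a' ∈ intWithin K A) :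
    Convex ℝ A ∧
    (∀ f ∈ interior (negDual K), SigmaDiffAt A f) ∧
    A + (K \ {0}) ⊆ intWithin K A := by
  have hmid : ∀ a ∈ A, ∀ a' ∈ A, a ≠ a' → midpoint ℝ a a' ∈ intWithin K A := by
    intro a ha a' ha' hne
    convert hsas a ha a' ha' hne (1 / 2) ⟨by norm_num, by norm_num⟩ using 1
    rw [midpoint_eq_smul_add, invOf_eq_inv]
    module
  exact ⟨convex_of_forall_openSegment_subset_intWithin hsas,
    fun f hf => sigmaDiffAt_of_mem_interior_negDual hKcone hAne hAclosed hAsub hmid hf,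
    add_diff_zero_subset_intWithin hKcone hAK hmid⟩

/-- Let `K, A` satisfy condition (H) in a finite-dimensional real normed
space. If every open segment joining two distinct points of `A` lies in `int_K A`, then
`A` is convex, `σ_A` is differentiable at every point of `int K⁻`, and
`A + (K \ {0}) ⊆ int_K A`. -/
theorem stmt11 [FiniteDimensional ℝ X] [Nontrivial X]
    (hdim : 2 ≤ Module.finrank ℝ X)
    (K A : Set X)
    (hKconv : Convex ℝ K) (hKclosed : IsClosed K)
    (hKcone : ∀ t : ℝ, 0 ≤ t → ∀ x ∈ K, t • x ∈ K)
    (hKpointed : K ∩ (-K) = {0}) (hKint : (interior K).Nonempty)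
    (hAne : A.Nonempty) (hAclosed : IsClosed A)
    (hAK : A + K = A) (hAsub : A ⊆ K \ {0})
    (hsas : ∀ a ∈ A, ∀ a' ∈ A, a ≠ a' →
      ∀ t : ℝ, t ∈ Ioo (0 : ℝ) 1 → t • a + (1 - t) • a' ∈ intWithin K A) :
    Convex ℝ A ∧
    (∀ f ∈ interior (negDual K), SigmaDiffAt A f) ∧
    A + (K \ {0}) ⊆ intWithin K A :=
  stmt11_general K A hKcone hAne hAclosed hAK hAsub hsas
end
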